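/- Let Δ be a d-dimensional diagonal matrix with strictly positive diagonal entries δ_1,...,δ_d. Then τ(Δ) = max{δ_1,...,δ_d}, where τ(A) := sup_{x ∈ S^d} min((Ax)^+) and S^d = {x ∈ (0,∞)^d : min(x)=1}. -/

import Mathlib

open scoped ENNReal

noncomputable def vmin {d : ℕ} (x : Fin d → ℝ) : ℝ := ⨅ i, x i

noncomputable def vpos {d : ℕ} (x : Fin d → ℝ) : Fin d → ℝ := fun i => max (x i) 0

noncomputable def tau {d : ℕ} (A : Matrix (Fin d) (Fin d) ℝ) : ℝ≥0∞ :=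
  ⨆ x ∈ {x : Fin d → ℝ | (∀ i, 0 < x i) ∧ vmin x = 1},
    ENNReal.ofReal (vmin (vpos (A.mulVec x)))

/-!
On a vector `x` with `min x = 1`, pick a coordinate `j` with `x j = 1`: then
`min ((Δx)^+) ≤ δ_j ≤ max δ`. Conversely the vector `x_i = max δ / δ_i` has minimum `1`, attained
at an index where `δ` is maximal, and `Δx` is the constant vector `max δ`.
-/

open Matrix

variable {d : ℕ}

lemma vmin_le (x : Fin d → ℝ) (i : Fin d) : vmin x ≤ x i :=
  ciInf_le (Finite.bddBelow_range x) i

lemma le_vmin [Nonempty (Fin d)] {x : Fin d → ℝ} {a : ℝ} (h : ∀ i, a ≤ x i) : a ≤ vmin x :=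
  le_ciInf h

lemma exists_eq_vmin [Nonempty (Fin d)] (x : Fin d → ℝ) : ∃ j, x j = vmin x :=
  exists_eq_ciInf_of_finite

lemma vmin_const [Nonempty (Fin d)] (c : ℝ) : vmin (fun _ : Fin d => c) = c :=
  ciInf_const

lemma vpos_diagonal_mulVec (δ x : Fin d → ℝ) :
    vpos (diagonal δ *ᵥ x) = fun i => max (δ i * x i) 0 := by
  ext i
  simp only [vpos, mulVec_diagonal]

lemma ofReal_vmin_vpos_le_tau (A : Matrix (Fin d) (Fin d) ℝ) {x : Fin d → ℝ}
    (hx : ∀ i, 0 < x i) (hx1 : vmin x = 1) :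
    ENNReal.ofReal (vmin (vpos (A *ᵥ x))) ≤ tau A :=
  le_iSup₂_of_le x ⟨hx, hx1⟩ le_rfl

lemma tau_diagonal_le [Nonempty (Fin d)] (δ : Fin d → ℝ) :
    tau (diagonal δ) ≤ ENNReal.ofReal (⨆ i, δ i) := by
  refine iSup₂_le fun x ⟨_, hx1⟩ => ?_
  obtain ⟨j, hj⟩ := exists_eq_vmin x
  rw [hx1] at hj
  calc ENNReal.ofReal (vmin (vpos (diagonal δ *ᵥ x)))
      ≤ ENNReal.ofReal (max (δ j * x j) 0) := by
        gcongr
        exact vpos_diagonal_mulVec δ x ▸ vmin_le _ j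
    _ = ENNReal.ofReal (δ j) := by
        rw [hj, mul_one, ENNReal.ofReal_max, ENNReal.ofReal_zero, max_zero]
    _ ≤ ENNReal.ofReal (⨆ i, δ i) := by
        gcongr
        exact le_ciSup (Finite.bddAbove_range δ) j

lemma ofReal_iSup_le_tau_diagonal [Nonempty (Fin d)] {δ : Fin d → ℝ} (hδ : ∀ i, 0 < δ i) :
    ENNReal.ofReal (⨆ i, δ i) ≤ tau (diagonal δ) := by
  set M := ⨆ i, δ i
  obtain ⟨k, hk⟩ : ∃ k, δ k = M := exists_eq_ciSup_of_finite
  have hM : 0 < M := hk ▸ hδ k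
  set x : Fin d → ℝ := fun i => M / δ i
  have hx : ∀ i, 0 < x i := fun i => div_pos hM (hδ i)
  have hx1 : vmin x = 1 := by
    refine le_antisymm ?_ (le_vmin fun i => ?_)
    · simpa [x, ← hk, div_self (hδ k).ne'] using vmin_le x k
    · exact (one_le_div (hδ i)).2 (le_ciSup (Finite.bddAbove_range δ) i)
  have hΔx : vpos (diagonal δ *ᵥ x) = fun _ => M := by
    ext i
    simp [vpos_diagonal_mulVec, x, mul_div_cancel₀ _ (hδ i).ne', hM.le]
  simpa [hΔx, vmin_const] using ofReal_vmin_vpos_le_tau (diagonal δ) hx hx1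

/-- Example 2.3: for a diagonal matrix with strictly positive diagonal entries δ,
τ(Δ) = max_i δ_i. -/
theorem tau_diagonal {d : ℕ} (hd : 0 < d) (δ : Fin d → ℝ) (hδ : ∀ i, 0 < δ i) :
    tau (Matrix.diagonal δ) = ENNReal.ofReal (⨆ i, δ i) := by
  have : Nonempty (Fin d) := Fin.pos_iff_nonempty.mp hd
  exact le_antisymm (tau_diagonal_le δ) (ofReal_iSup_le_tau_diagonal hδ)
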